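/- arXiv:2303.10043 — 4 statements merged into one kernel-verified Lean document; each statement's English description precedes it below -/
import Mathlib

section
/- Let T > 0, σ ≥ 0, Δ ∈ ℝ, and let the temporary price impact be f(ν) = a₁ν + a₂ with a₁ > 0 and the permanent price impact be g(ν) = b₁ν with b₁ ∈ ℝ. Define H(t,S,q) = q(S − Δ/2 − a₂) − (b₁/2 + a₁/(T−t)) q². Then at every point (t,S,q) with 0 ≤ t < T and q ≥ 0, H satisfies the HJB equation: ∂ₜH(t,S,q) + (σ²/2) ∂²_{SS}H(t,S,q) + sup_{ν ≥ 0} { −b₁ν ∂_S H(t,S,q) − ν ∂_q H(t,S,q) + (S − Δ/2 − a₁ν − a₂)ν } = 0. -/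
/-!
Since `H` is affine in `S`, the diffusion term vanishes and the permanent impact terms cancel:
the Hamiltonian reduces to the concave quadratic `(2 a₁ q / (T - t)) ν - a₁ ν²`. Its maximum over
`ν ≥ 0` is attained at the Almgren–Chriss rate `ν* = q / (T - t)` and equals `a₁ q² / (T - t)²`,
which is exactly `-∂ₜH`.
-/

/-- Value function for the optimal liquidation problem with linear temporary
price impact `f(ν) = a₁ν + a₂` and linear permanent price impact `g(ν) = b₁ν`. -/
noncomputable def Hlin (T Δ a₁ a₂ b₁ : ℝ) (t S q : ℝ) : ℝ :=
  q * (S - Δ / 2 - a₂) - (b₁ / 2 + a₁ / (T - t)) * q ^ 2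

theorem isGreatest_mul_sub_mul_sq {a c : ℝ} (ha : 0 < a) (hc : 0 ≤ c) :
    IsGreatest {y : ℝ | ∃ ν : ℝ, 0 ≤ ν ∧ y = c * ν - a * ν ^ 2} (c ^ 2 / (4 * a)) := by
  refine ⟨⟨c / (2 * a), by positivity, by field_simp; ring⟩, ?_⟩
  rintro y ⟨ν, -, rfl⟩
  have hsq : c ^ 2 / (4 * a) - (c * ν - a * ν ^ 2) = a * (ν - c / (2 * a)) ^ 2 := by
    field_simp; ring
  linarith [mul_nonneg ha.le (sq_nonneg (ν - c / (2 * a)))]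

section Hlin

variable (T Δ a₁ a₂ b₁ : ℝ)

theorem hasDerivAt_Hlin_time {t : ℝ} (S q : ℝ) (ht : T - t ≠ 0) :
    HasDerivAt (fun τ => Hlin T Δ a₁ a₂ b₁ τ S q) (-(a₁ / (T - t) ^ 2 * q ^ 2)) t := by
  have hgap : HasDerivAt (fun τ : ℝ => T - τ) (-1) t := by
    simpa using (hasDerivAt_id t).const_sub T
  have hcoef : HasDerivAt (fun τ : ℝ => a₁ / (T - τ)) (a₁ / (T - t) ^ 2) t :=
    ((hasDerivAt_const t a₁).div hgap ht).congr_deriv (by ring)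
  exact ((hcoef.const_add (b₁ / 2)).mul_const (q ^ 2)).const_sub _

theorem deriv_Hlin_price (t q : ℝ) :
    deriv (fun s => Hlin T Δ a₁ a₂ b₁ t s q) = fun _ => q := by
  funext s
  unfold Hlin
  simp

theorem hasDerivAt_Hlin_inventory (t S q : ℝ) :
    HasDerivAt (fun p => Hlin T Δ a₁ a₂ b₁ t S p)
      ((S - Δ / 2 - a₂) - (b₁ / 2 + a₁ / (T - t)) * (2 * q)) q := by
  have hlin : HasDerivAt (fun p : ℝ => p * (S - Δ / 2 - a₂)) (S - Δ / 2 - a₂) q := by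
    simpa using (hasDerivAt_id q).mul_const (S - Δ / 2 - a₂)
  have hquad : HasDerivAt (fun p : ℝ => (b₁ / 2 + a₁ / (T - t)) * p ^ 2)
      ((b₁ / 2 + a₁ / (T - t)) * (2 * q)) q :=
    ((hasDerivAt_pow 2 q).const_mul _).congr_deriv (by ring)
  exact hlin.sub hquad

end Hlin

theorem stmt_0_general (T σ Δ a₁ a₂ b₁ : ℝ) (ha₁ : 0 < a₁)
    (t S q : ℝ) (htT : t < T) (hq : 0 ≤ q) :
    deriv (fun τ => Hlin T Δ a₁ a₂ b₁ τ S q) t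
      + σ ^ 2 / 2 * deriv (deriv (fun s => Hlin T Δ a₁ a₂ b₁ t s q)) S
      + sSup {y : ℝ | ∃ ν : ℝ, 0 ≤ ν ∧ y =
          -(b₁ * ν) * deriv (fun s => Hlin T Δ a₁ a₂ b₁ t s q) S
          - ν * deriv (fun p => Hlin T Δ a₁ a₂ b₁ t S p) q
          + (S - Δ / 2 - a₁ * ν - a₂) * ν} = 0 := by
  have hgap : 0 < T - t := sub_pos.mpr htT
  have hamiltonian : ∀ ν : ℝ,
      -(b₁ * ν) * q - ν * ((S - Δ / 2 - a₂) - (b₁ / 2 + a₁ / (T - t)) * (2 * q))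
        + (S - Δ / 2 - a₁ * ν - a₂) * ν = 2 * a₁ * q / (T - t) * ν - a₁ * ν ^ 2 := by
    intro ν; field_simp; ring
  rw [(hasDerivAt_Hlin_time T Δ a₁ a₂ b₁ S q hgap.ne').deriv, deriv_Hlin_price, deriv_const,
    (hasDerivAt_Hlin_inventory T Δ a₁ a₂ b₁ t S q).deriv]
  simp_rw [hamiltonian]
  rw [(isGreatest_mul_sub_mul_sq ha₁ (by positivity)).csSup_eq]
  field_simp
  ring

/-- With linear TPI and linear PPI, the candidate value function
`H(t,S,q) = q(S − Δ/2 − a₂) − (b₁/2 + a₁/(T−t)) q²` satisfies the HJB equation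
`∂ₜH + (σ²/2)∂²_{SS}H + sup_{ν ≥ 0} {−b₁ν ∂_S H − ν ∂_q H + (S − Δ/2 − a₁ν − a₂)ν} = 0`
at every point with `0 ≤ t < T` and `q ≥ 0`. -/
theorem stmt_0 (T σ Δ a₁ a₂ b₁ : ℝ) (hT : 0 < T) (hσ : 0 ≤ σ) (ha₁ : 0 < a₁)
    (t S q : ℝ) (ht0 : 0 ≤ t) (htT : t < T) (hq : 0 ≤ q) :
    deriv (fun τ => Hlin T Δ a₁ a₂ b₁ τ S q) t
      + σ ^ 2 / 2 * deriv (deriv (fun s => Hlin T Δ a₁ a₂ b₁ t s q)) S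
      + sSup {y : ℝ | ∃ ν : ℝ, 0 ≤ ν ∧ y =
          -(b₁ * ν) * deriv (fun s => Hlin T Δ a₁ a₂ b₁ t s q) S
          - ν * deriv (fun p => Hlin T Δ a₁ a₂ b₁ t S p) q
          + (S - Δ / 2 - a₁ * ν - a₂) * ν} = 0 :=
  stmt_0_general T σ Δ a₁ a₂ b₁ ha₁ t S q htT hq
end

section
/- Let T > 0, Δ ∈ ℝ, a₁ > 0, a₂ ∈ ℝ, b₁ ∈ ℝ, and define H(t,S,q) = q(S − Δ/2 − a₂) − (b₁/2 + a₁/(T−t)) q². For every (t,S,q) with 0 ≤ t < T and q ≥ 0, the supremum over ν ≥ 0 of the map ν ↦ −b₁ν ∂_S H(t,S,q) − ν ∂_q H(t,S,q) + (S − Δ/2 − a₁ν − a₂)ν is attained at ν* = q/(T−t); moreover, if q > 0 this maximizer is unique. -/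
/-- The Hamiltonian `ν ↦ −b₁ν ∂_S H − ν ∂_q H + (S − Δ/2 − a₁ν − a₂)ν`
appearing in the HJB equation, evaluated with the partial derivatives of `Hlin`. -/
noncomputable def HamLin (T Δ a₁ a₂ b₁ : ℝ) (t S q ν : ℝ) : ℝ :=
  -(b₁ * ν) * deriv (fun s => Hlin T Δ a₁ a₂ b₁ t s q) S
    - ν * deriv (fun p => Hlin T Δ a₁ a₂ b₁ t S p) q
    + (S - Δ / 2 - a₁ * ν - a₂) * ν

/-! The permanent-impact terms cancel: substituting the partial derivatives of `Hlin`,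
the Hamiltonian becomes the concave parabola `a₁ (2 ν q / (T - t) - ν²)`, whose vertex is
`ν* = q / (T - t)`. -/

lemma Hlin_hasDerivAt_S (T Δ a₁ a₂ b₁ t S q : ℝ) :
    HasDerivAt (fun s => Hlin T Δ a₁ a₂ b₁ t s q) q S := by
  unfold Hlin
  simpa using ((((hasDerivAt_id S).sub_const (Δ / 2)).sub_const a₂).const_mul q).sub_const
    ((b₁ / 2 + a₁ / (T - t)) * q ^ 2)

lemma Hlin_hasDerivAt_q (T Δ a₁ a₂ b₁ t S q : ℝ) :
    HasDerivAt (fun p => Hlin T Δ a₁ a₂ b₁ t S p)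
      ((S - Δ / 2 - a₂) - (b₁ + 2 * a₁ / (T - t)) * q) q := by
  refine (((hasDerivAt_id' q).mul_const (S - Δ / 2 - a₂)).sub
    ((hasDerivAt_pow 2 q).const_mul (b₁ / 2 + a₁ / (T - t)))).congr_deriv ?_
  push_cast
  ring

lemma HamLin_eq_sub_sq (T Δ a₁ a₂ b₁ t S q ν : ℝ) :
    HamLin T Δ a₁ a₂ b₁ t S q ν = a₁ * (q / (T - t)) ^ 2 - a₁ * (ν - q / (T - t)) ^ 2 := by
  rw [HamLin, (Hlin_hasDerivAt_S ..).deriv, (Hlin_hasDerivAt_q ..).deriv]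
  ring

theorem stmt_1_general (T Δ a₁ a₂ b₁ : ℝ) (ha₁ : 0 < a₁)
    (t S q : ℝ) (htT : t < T) (hq : 0 ≤ q) :
    0 ≤ q / (T - t)
    ∧ (∀ ν : ℝ, 0 ≤ ν → HamLin T Δ a₁ a₂ b₁ t S q ν ≤ HamLin T Δ a₁ a₂ b₁ t S q (q / (T - t)))
    ∧ (0 < q → ∀ ν : ℝ, 0 ≤ ν →
        HamLin T Δ a₁ a₂ b₁ t S q ν = HamLin T Δ a₁ a₂ b₁ t S q (q / (T - t)) →
        ν = q / (T - t)) := by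
  have hτ : 0 < T - t := sub_pos.mpr htT
  refine ⟨div_nonneg hq hτ.le, fun ν _ => ?_, fun _ ν _ hν => ?_⟩
  · simp only [HamLin_eq_sub_sq, sub_self]
    nlinarith [sq_nonneg (ν - q / (T - t))]
  · simp only [HamLin_eq_sub_sq, sub_self, sub_right_inj] at hν
    simpa [ha₁.ne', sub_eq_zero] using hν

/-- With linear TPI and linear PPI, the supremum over `ν ≥ 0` of the Hamiltonian
is attained at `ν* = q/(T−t)`; moreover, for `q > 0` this maximizer is unique. -/
theorem stmt_1 (T Δ a₁ a₂ b₁ : ℝ) (hT : 0 < T) (ha₁ : 0 < a₁)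
    (t S q : ℝ) (ht0 : 0 ≤ t) (htT : t < T) (hq : 0 ≤ q) :
    0 ≤ q / (T - t)
    ∧ (∀ ν : ℝ, 0 ≤ ν → HamLin T Δ a₁ a₂ b₁ t S q ν ≤ HamLin T Δ a₁ a₂ b₁ t S q (q / (T - t)))
    ∧ (0 < q → ∀ ν : ℝ, 0 ≤ ν →
        HamLin T Δ a₁ a₂ b₁ t S q ν = HamLin T Δ a₁ a₂ b₁ t S q (q / (T - t)) →
        ν = q / (T - t)) :=
  stmt_1_general T Δ a₁ a₂ b₁ ha₁ t S q htT hq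
end

section
/- Let T > 0, c₁ ≠ 0 and a₁ ∈ ℝ. The function h(t,q) = −4(c₁q + a₁)³/(9c₁²(T−t)), defined for 0 ≤ t < T and q ∈ ℝ, satisfies ∂ₜh(t,q) + (∂_q h(t,q))²/(4(c₁q + a₁)) = 0 at every point (t,q) with 0 ≤ t < T and c₁q + a₁ ≠ 0. -/
/-- The function `h(t,q) = −4(c₁q + a₁)³/(9c₁²(T−t))` satisfies the first-order
nonlinear PDE `∂ₜh + (∂_q h)²/(4(c₁q + a₁)) = 0` at every point `(t,q)` with
`0 ≤ t < T` and `c₁q + a₁ ≠ 0`. -/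
theorem stmt_9 (T c₁ a₁ : ℝ) (hT : 0 < T) (hc₁ : c₁ ≠ 0)
    (t q : ℝ) (ht0 : 0 ≤ t) (htT : t < T) (hne : c₁ * q + a₁ ≠ 0) :
    deriv (fun τ : ℝ => -(4 * (c₁ * q + a₁) ^ 3) / (9 * c₁ ^ 2 * (T - τ))) t
      + (deriv (fun p : ℝ => -(4 * (c₁ * p + a₁) ^ 3) / (9 * c₁ ^ 2 * (T - t))) q) ^ 2
        / (4 * (c₁ * q + a₁)) = 0 := by
  have hTt : T - t ≠ 0 := sub_ne_zero.mpr (ne_of_gt htT).symm.symm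
  have hden : 9 * c₁ ^ 2 * (T - t) ≠ 0 := by positivity
  set A := c₁ * q + a₁ with hA
  have h1 : HasDerivAt (fun τ : ℝ => -(4 * A ^ 3) / (9 * c₁ ^ 2 * (T - τ)))
      ((0 * (9 * c₁ ^ 2 * (T - t)) - -(4 * A ^ 3) * (9 * c₁ ^ 2 * (0 - 1)))
        / (9 * c₁ ^ 2 * (T - t)) ^ 2) t := by
    exact (hasDerivAt_const t (-(4 * A ^ 3))).div
      (((hasDerivAt_const t T).sub (hasDerivAt_id t)).const_mul (9 * c₁ ^ 2)) hden
  have h2 : HasDerivAt (fun p : ℝ => -(4 * (c₁ * p + a₁) ^ 3) / (9 * c₁ ^ 2 * (T - t)))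
      (-(4 * (3 * A ^ 2 * (c₁ * 1))) / (9 * c₁ ^ 2 * (T - t))) q := by
    have : HasDerivAt (fun p : ℝ => c₁ * p + a₁) (c₁ * 1) q :=
      ((hasDerivAt_id q).const_mul c₁).add_const a₁
    exact ((this.pow 3).const_mul 4).neg.div_const _
  rw [h1.deriv, h2.deriv]
  field_simp
  ring
end

section
/- Let T > 0, S₀, Δ, a₂, b₁ ∈ ℝ, a₁ > 0, Υ ≥ 0, and let ν : [0,T] → ℝ be a continuous nonnegative function with ∫₀^T ν(t) dt = Υ. Define S(t) = S₀ − b₁ ∫₀^t ν(s) ds. Then ∫₀^T (S(t) − Δ/2 − a₁ν(t) − a₂) ν(t) dt ≤ Υ(S₀ − Δ/2 − a₂) − (b₁/2 + a₁/T)Υ², with equality if and only if ν(t) = Υ/T for all t ∈ [0,T]. In particular, the right-hand side equals H(0,S₀,Υ) where H(t,S,q) = q(S − Δ/2 − a₂) − (b₁/2 + a₁/(T−t))q², so the constant-rate strategy ν ≡ Υ/T achieves the value function. -/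
/-!
Write `F t = ∫₀ᵗ ν`. The permanent-impact cost is `b₁ ∫₀ᵀ F ν = b₁ F(T)²/2 = b₁ Υ²/2` (substitute
`u = F t`), so the revenue is `(S₀ − Δ/2 − a₂)Υ − b₁Υ²/2 − a₁∫₀ᵀ ν²` whatever the strategy. Only
the temporary-impact term depends on `ν`, and `∫₀ᵀ ν² = Υ²/T + ∫₀ᵀ (ν − Υ/T)²`; the last integral
is nonnegative and, `ν` being continuous, vanishes iff `ν ≡ Υ/T` on `[0, T]`.
-/

open MeasureTheory intervalIntegral Set

section

variable {f : ℝ → ℝ} {a b : ℝ}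

theorem hasDerivAt_primitive_of_mem_Ioo (hf : ContinuousOn f (Icc a b)) {x : ℝ}
    (hx : x ∈ Ioo a b) : HasDerivAt (fun u => ∫ s in a..u, f s) (f x) x :=
  integral_hasDerivAt_right
    ((hf.mono (Icc_subset_Icc_right hx.2.le)).intervalIntegrable_of_Icc hx.1.le)
    ((hf.mono Ioo_subset_Icc_self).stronglyMeasurableAtFilter isOpen_Ioo x hx)
    (hf.continuousAt (Icc_mem_nhds hx.1 hx.2))

theorem continuousOn_primitive_Icc (hf : ContinuousOn f (Icc a b)) (hab : a ≤ b) :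
    ContinuousOn (fun u => ∫ s in a..u, f s) (Icc a b) := by
  simpa [uIcc_of_le hab] using continuousOn_primitive_interval (μ := volume) (a := a) (b := b)
    (by simpa [uIcc_of_le hab] using hf.integrableOn_Icc)

theorem integral_primitive_mul_self (hab : a ≤ b) (hf : ContinuousOn f (Icc a b)) :
    ∫ t in a..b, (∫ s in a..t, f s) * f t = (∫ t in a..b, f t) ^ 2 / 2 := by
  have := integral_comp_mul_deriv'' (g := id)
    (by rw [uIcc_of_le hab]; exact continuousOn_primitive_Icc hf hab)
    (fun x hx => by
      rw [min_eq_left hab, max_eq_right hab] at hx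
      exact (hasDerivAt_primitive_of_mem_Ioo hf hx).hasDerivWithinAt)
    (by rwa [uIcc_of_le hab]) continuousOn_id
  simpa [integral_id] using this

theorem integral_sub_const_sq (hf : IntervalIntegrable f volume a b)
    (hf2 : IntervalIntegrable (fun t => f t ^ 2) volume a b) (c : ℝ) :
    ∫ t in a..b, (f t - c) ^ 2 =
      (∫ t in a..b, f t ^ 2) - 2 * c * (∫ t in a..b, f t) + c ^ 2 * (b - a) := by
  have hexp : ∀ t, (f t - c) ^ 2 = f t ^ 2 - 2 * c * f t + c ^ 2 := fun t => by ring
  simp_rw [hexp]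
  rw [integral_add (hf2.sub (hf.const_mul _)) intervalIntegrable_const,
    integral_sub hf2 (hf.const_mul _), intervalIntegral.integral_const_mul,
    intervalIntegral.integral_const, smul_eq_mul]
  ring

theorem integral_sq_eq_sq_integral_div_add (hab : a < b) (hf : ContinuousOn f (Icc a b)) :
    ∫ t in a..b, f t ^ 2 =
      (∫ t in a..b, f t) ^ 2 / (b - a) +
        ∫ t in a..b, (f t - (∫ s in a..b, f s) / (b - a)) ^ 2 := by
  rw [integral_sub_const_sq (hf.intervalIntegrable_of_Icc hab.le)
    ((hf.pow 2).intervalIntegrable_of_Icc hab.le)]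
  field_simp [(sub_pos.2 hab).ne']
  ring

theorem sq_integral_div_le_integral_sq (hab : a < b) (hf : ContinuousOn f (Icc a b)) :
    (∫ t in a..b, f t) ^ 2 / (b - a) ≤ ∫ t in a..b, f t ^ 2 := by
  rw [integral_sq_eq_sq_integral_div_add hab hf]
  exact le_add_of_nonneg_right (integral_nonneg hab.le fun t _ => sq_nonneg _)

theorem integral_sq_eq_sq_integral_div_iff (hab : a < b) (hf : ContinuousOn f (Icc a b)) :
    ∫ t in a..b, f t ^ 2 = (∫ t in a..b, f t) ^ 2 / (b - a) ↔
      ∀ t ∈ Icc a b, f t = (∫ s in a..b, f s) / (b - a) := by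
  rw [integral_sq_eq_sq_integral_div_add hab hf, add_eq_left]
  constructor
  · intro h t ht
    by_contra hne
    exact (integral_pos hab ((hf.sub continuousOn_const).pow 2) (fun _ _ => sq_nonneg _)
      ⟨t, ht, sq_pos_of_ne_zero (sub_ne_zero.2 hne)⟩).ne' h
  · intro h
    rw [integral_congr (g := fun _ => (0 : ℝ)) fun t ht => ?_, intervalIntegral.integral_zero]
    rw [h t (by rwa [uIcc_of_le hab.le] at ht), sub_self, zero_pow two_ne_zero]

end

theorem integral_revenue_eq {T S₀ Δ a₂ b₁ a₁ : ℝ} (hT : 0 ≤ T) {ν : ℝ → ℝ}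
    (hν : ContinuousOn ν (Icc 0 T)) :
    ∫ t in (0 : ℝ)..T, ((S₀ - b₁ * ∫ s in (0 : ℝ)..t, ν s) - Δ / 2 - a₁ * ν t - a₂) * ν t =
      (S₀ - Δ / 2 - a₂) * (∫ t in (0 : ℝ)..T, ν t)
        - b₁ * ((∫ t in (0 : ℝ)..T, ν t) ^ 2 / 2) - a₁ * ∫ t in (0 : ℝ)..T, ν t ^ 2 := by
  have hνi : IntervalIntegrable ν volume 0 T := hν.intervalIntegrable_of_Icc hT
  have hν2i : IntervalIntegrable (fun t => ν t ^ 2) volume 0 T :=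
    (hν.pow 2).intervalIntegrable_of_Icc hT
  have hFνi : IntervalIntegrable (fun t => (∫ s in (0 : ℝ)..t, ν s) * ν t) volume 0 T :=
    ((continuousOn_primitive_Icc hν hT).mul hν).intervalIntegrable_of_Icc hT
  have hexp : ∀ t, ((S₀ - b₁ * ∫ s in (0 : ℝ)..t, ν s) - Δ / 2 - a₁ * ν t - a₂) * ν t =
      (S₀ - Δ / 2 - a₂) * ν t - b₁ * ((∫ s in (0 : ℝ)..t, ν s) * ν t) - a₁ * ν t ^ 2 :=
    fun t => by ring
  simp_rw [hexp]
  rw [integral_sub ((hνi.const_mul _).sub (hFνi.const_mul _)) (hν2i.const_mul _),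
    integral_sub (hνi.const_mul _) (hFνi.const_mul _), intervalIntegral.integral_const_mul,
    intervalIntegral.integral_const_mul, intervalIntegral.integral_const_mul,
    integral_primitive_mul_self hT hν]

theorem stmt_15_general (T S₀ Δ a₂ b₁ a₁ Υ : ℝ) (hT : 0 < T) (ha₁ : 0 < a₁)
    (ν : ℝ → ℝ) (hν : ContinuousOn ν (Set.Icc 0 T))
    (htotal : ∫ t in (0 : ℝ)..T, ν t = Υ) :
    (∫ t in (0 : ℝ)..T,
        ((S₀ - b₁ * ∫ s in (0 : ℝ)..t, ν s) - Δ / 2 - a₁ * ν t - a₂) * ν t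
      ≤ Υ * (S₀ - Δ / 2 - a₂) - (b₁ / 2 + a₁ / T) * Υ ^ 2)
    ∧ ((∫ t in (0 : ℝ)..T,
          ((S₀ - b₁ * ∫ s in (0 : ℝ)..t, ν s) - Δ / 2 - a₁ * ν t - a₂) * ν t
        = Υ * (S₀ - Δ / 2 - a₂) - (b₁ / 2 + a₁ / T) * Υ ^ 2)
        ↔ ∀ t ∈ Set.Icc (0 : ℝ) T, ν t = Υ / T)
    ∧ Υ * (S₀ - Δ / 2 - a₂) - (b₁ / 2 + a₁ / T) * Υ ^ 2
        = (fun (t S q : ℝ) => q * (S - Δ / 2 - a₂) - (b₁ / 2 + a₁ / (T - t)) * q ^ 2)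
            0 S₀ Υ := by
  have hle := sq_integral_div_le_integral_sq hT hν
  have heq_iff := integral_sq_eq_sq_integral_div_iff hT hν
  rw [htotal, sub_zero] at hle heq_iff
  have hbound : Υ * (S₀ - Δ / 2 - a₂) - (b₁ / 2 + a₁ / T) * Υ ^ 2
      = (S₀ - Δ / 2 - a₂) * Υ - b₁ * (Υ ^ 2 / 2) - a₁ * (Υ ^ 2 / T) := by
    ring
  rw [integral_revenue_eq hT.le hν, htotal, hbound, ← heq_iff]
  refine ⟨by linarith [mul_le_mul_of_nonneg_left hle ha₁.le], ?_,
    by simp only [sub_zero]; ring⟩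
  rw [sub_right_inj, mul_right_inj' ha₁.ne', eq_comm]

/-- Optimality of the constant-rate strategy: for any continuous nonnegative rate
`ν` with `∫₀^T ν = Υ`, the revenue with linear permanent impact `b₁` and linear
temporary impact slope `a₁ > 0` is at most `Υ(S₀ − Δ/2 − a₂) − (b₁/2 + a₁/T)Υ²`,
with equality iff `ν ≡ Υ/T` on `[0,T]`; moreover this bound equals `H(0,S₀,Υ)`
for the value function `H(t,S,q) = q(S − Δ/2 − a₂) − (b₁/2 + a₁/(T−t))q²`. -/
theorem stmt_15 (T S₀ Δ a₂ b₁ a₁ Υ : ℝ) (hT : 0 < T) (ha₁ : 0 < a₁) (hΥ : 0 ≤ Υ)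
    (ν : ℝ → ℝ) (hν : ContinuousOn ν (Set.Icc 0 T))
    (hpos : ∀ t ∈ Set.Icc (0 : ℝ) T, 0 ≤ ν t)
    (htotal : ∫ t in (0 : ℝ)..T, ν t = Υ) :
    (∫ t in (0 : ℝ)..T,
        ((S₀ - b₁ * ∫ s in (0 : ℝ)..t, ν s) - Δ / 2 - a₁ * ν t - a₂) * ν t
      ≤ Υ * (S₀ - Δ / 2 - a₂) - (b₁ / 2 + a₁ / T) * Υ ^ 2)
    ∧ ((∫ t in (0 : ℝ)..T,
          ((S₀ - b₁ * ∫ s in (0 : ℝ)..t, ν s) - Δ / 2 - a₁ * ν t - a₂) * ν t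
        = Υ * (S₀ - Δ / 2 - a₂) - (b₁ / 2 + a₁ / T) * Υ ^ 2)
        ↔ ∀ t ∈ Set.Icc (0 : ℝ) T, ν t = Υ / T)
    ∧ Υ * (S₀ - Δ / 2 - a₂) - (b₁ / 2 + a₁ / T) * Υ ^ 2
        = (fun (t S q : ℝ) => q * (S - Δ / 2 - a₂) - (b₁ / 2 + a₁ / (T - t)) * q ^ 2)
            0 S₀ Υ :=
  stmt_15_general T S₀ Δ a₂ b₁ a₁ Υ hT ha₁ ν hν htotal
end
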